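/- arXiv:1203.1368 — 5 statements merged into one kernel-verified Lean document; each statement's English description precedes it below -/
import Mathlib

section
/- For every t > 0, the function r ↦ √(4r + 2t) − √(r + t) − √r is nonnegative and Lebesgue integrable on (0, ∞), and ∫_0^∞ (√(4r + 2t) − √(r + t) − √r) dr = (2/3)(1 − 1/√2) t^{3/2}. -/
/-!
With `c = t / 2` the integrand is `2√(r + c) - √(r + 2c) - √r`, a second difference of the concave
function `√`, hence nonnegative. It is the derivative of `2/3` times the second difference of
`φ(x) = x√x = x^{3/2}`, which tends to `0` at infinity because the first-order Taylor remainder of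
`φ` at `r` is `O(c² / √r)`. So the integral is `-(2/3)(2φ(c) - φ(2c))`.
-/

open MeasureTheory Real Set Filter Topology

namespace Real

variable {r c : ℝ}

lemma sqrt_add_sqrt_le_sqrt_two_mul_add {a b : ℝ} (ha : 0 ≤ a) (hb : 0 ≤ b) :
    √a + √b ≤ √(2 * (a + b)) := by
  rw [le_sqrt (by positivity) (by positivity)]
  nlinarith [sq_sqrt ha, sq_sqrt hb, sq_nonneg (√a - √b)]

lemma sqrt_second_diff_nonneg (hr : 0 ≤ r) (hc : 0 ≤ c) :
    0 ≤ 2 * √(r + c) - √(r + 2 * c) - √r := by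
  have := calc
    √(r + 2 * c) + √r ≤ √(2 * ((r + 2 * c) + r)) :=
      sqrt_add_sqrt_le_sqrt_two_mul_add (by positivity) hr
    _ = √(2 ^ 2 * (r + c)) := by ring_nf
    _ = 2 * √(r + c) := by rw [sqrt_mul (by positivity), sqrt_sq zero_le_two]
  linarith

lemma hasDerivAt_mul_sqrt (hr : 0 < r) : HasDerivAt (fun x => x * √x) (3 / 2 * √r) r := by
  refine ((hasDerivAt_id' r).mul (hasDerivAt_sqrt hr.ne')).congr_deriv ?_
  have := sqrt_pos.2 hr
  field_simp
  nlinarith [mul_self_sqrt hr.le]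

lemma mul_sqrt_add_sub_taylor_eq (hr : 0 ≤ r) (hc : 0 ≤ c) :
    (r + c) * √(r + c) - r * √r - 3 / 2 * c * √r =
      (√(r + c) - √r) ^ 2 * (√(r + c) + √r / 2) := by
  linear_combination (3 / 2 * √r - √(r + c)) * sq_sqrt (add_nonneg hr hc) - √r / 2 * sq_sqrt hr

lemma mul_sqrt_add_sub_taylor_nonneg (hr : 0 ≤ r) (hc : 0 ≤ c) :
    0 ≤ (r + c) * √(r + c) - r * √r - 3 / 2 * c * √r := by
  rw [mul_sqrt_add_sub_taylor_eq hr hc]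
  positivity

lemma mul_sqrt_add_sub_taylor_le (hr : 0 < r) (hc : 0 ≤ c) :
    (r + c) * √(r + c) - r * √r - 3 / 2 * c * √r ≤ 3 / 4 * c ^ 2 / √r := by
  have hc' : c = (√(r + c) - √r) * (√(r + c) + √r) := by
    linear_combination -sq_sqrt (add_nonneg hr.le hc) + sq_sqrt hr.le
  rw [mul_sqrt_add_sub_taylor_eq hr.le hc, le_div_iff₀ (sqrt_pos.2 hr)]
  calc (√(r + c) - √r) ^ 2 * (√(r + c) + √r / 2) * √r
      ≤ (√(r + c) - √r) ^ 2 * (3 / 4 * (√(r + c) + √r) ^ 2) := by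
        rw [mul_assoc]
        refine mul_le_mul_of_nonneg_left ?_ (sq_nonneg _)
        nlinarith [sq_nonneg (√(r + c) - √r), sqrt_nonneg (r + c), sqrt_nonneg r]
    _ = 3 / 4 * ((√(r + c) - √r) * (√(r + c) + √r)) ^ 2 := by ring
    _ = 3 / 4 * c ^ 2 := by rw [← hc']

lemma tendsto_mul_sqrt_second_diff_atTop (hc : 0 ≤ c) :
    Tendsto (fun r => 2 * ((r + c) * √(r + c)) - (r + 2 * c) * √(r + 2 * c) - r * √r)
      atTop (𝓝 0) := by
  refine squeeze_zero_norm' ?_ (tendsto_const_nhds (x := 3 * c ^ 2).div_atTop tendsto_sqrt_atTop)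
  filter_upwards [eventually_gt_atTop 0] with r hr
  -- the second difference is `2 R(c) - R(2c)` for the Taylor remainder `R` at `r`
  have h₁ := mul_sqrt_add_sub_taylor_nonneg hr.le hc
  have h₂ := mul_sqrt_add_sub_taylor_le hr hc
  have h₃ := mul_sqrt_add_sub_taylor_nonneg hr.le (mul_nonneg zero_le_two hc)
  have h₄ := mul_sqrt_add_sub_taylor_le hr (mul_nonneg zero_le_two hc)
  have h₅ : 3 / 4 * (2 * c) ^ 2 / √r = 3 * c ^ 2 / √r := by ring
  have h₆ : 3 * c ^ 2 / √r = 4 * (3 / 4 * c ^ 2 / √r) := by ring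
  rw [norm_eq_abs, abs_le]
  constructor <;> linarith

lemma hasDerivAt_mul_sqrt_second_diff (hr : 0 < r) (hc : 0 ≤ c) :
    HasDerivAt
      (fun x => 2 / 3 * (2 * ((x + c) * √(x + c)) - (x + 2 * c) * √(x + 2 * c) - x * √x))
      (2 * √(r + c) - √(r + 2 * c) - √r) r := by
  have h₁ := (hasDerivAt_mul_sqrt (by positivity : 0 < r + c)).comp_add_const
  have h₂ := (hasDerivAt_mul_sqrt (by positivity : 0 < r + 2 * c)).comp_add_const
  have h₃ := hasDerivAt_mul_sqrt hr
  exact ((((h₁.const_mul 2).sub h₂).sub h₃).const_mul (2 / 3)).congr_deriv (by ring)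

lemma integrableOn_sqrt_second_diff (hc : 0 ≤ c) :
    IntegrableOn (fun r => 2 * √(r + c) - √(r + 2 * c) - √r) (Ioi 0) :=
  integrableOn_Ioi_deriv_of_nonneg (by fun_prop : Continuous _).continuousWithinAt
    (fun _ hr => hasDerivAt_mul_sqrt_second_diff hr hc)
    (fun _ hr => sqrt_second_diff_nonneg (le_of_lt hr) hc)
    ((tendsto_mul_sqrt_second_diff_atTop hc).const_mul (2 / 3))

lemma integral_sqrt_second_diff (hc : 0 ≤ c) :
    ∫ r in Ioi 0, (2 * √(r + c) - √(r + 2 * c) - √r) = 4 / 3 * c * (√(2 * c) - √c) := by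
  rw [integral_Ioi_of_hasDerivAt_of_nonneg (by fun_prop : Continuous _).continuousWithinAt
    (fun _ hr => hasDerivAt_mul_sqrt_second_diff hr hc)
    (fun _ hr => sqrt_second_diff_nonneg (le_of_lt hr) hc)
    ((tendsto_mul_sqrt_second_diff_atTop hc).const_mul (2 / 3))]
  simp only [zero_add, sqrt_zero, mul_zero, sub_zero]
  ring

end Real

theorem stmt4 (t : ℝ) (ht : 0 < t) :
    (∀ r ∈ Set.Ioi (0:ℝ),
        0 ≤ Real.sqrt (4 * r + 2 * t) - Real.sqrt (r + t) - Real.sqrt r) ∧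
    IntegrableOn (fun r => Real.sqrt (4 * r + 2 * t) - Real.sqrt (r + t) - Real.sqrt r)
      (Set.Ioi 0) ∧
    ∫ r in Set.Ioi (0:ℝ),
        (Real.sqrt (4 * r + 2 * t) - Real.sqrt (r + t) - Real.sqrt r)
      = (2 / 3) * (1 - 1 / Real.sqrt 2) * t ^ ((3:ℝ)/2) := by
  have hc : 0 ≤ t / 2 := by positivity
  have hf (r : ℝ) :
      √(4 * r + 2 * t) - √(r + t) - √r = 2 * √(r + t / 2) - √(r + 2 * (t / 2)) - √r := by
    rw [show 4 * r + 2 * t = 2 ^ 2 * (r + t / 2) by ring, sqrt_mul (by positivity),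
      sqrt_sq zero_le_two, show r + 2 * (t / 2) = r + t by ring]
  have ht32 : t ^ ((3:ℝ) / 2) = t * √t := by
    rw [show (3:ℝ) / 2 = 1 + 1 / 2 by norm_num, rpow_add ht, rpow_one, ← sqrt_eq_rpow]
  simp only [hf]
  refine ⟨fun r hr => sqrt_second_diff_nonneg (le_of_lt hr) hc,
    integrableOn_sqrt_second_diff hc, ?_⟩
  rw [integral_sqrt_second_diff hc, ht32, mul_div_cancel₀ t two_ne_zero,
    sqrt_div' t zero_le_two]
  ring
end

section
/- Let X and Z be independent centered Gaussian random variables with variances σ² > 0 and τ² > 0, respectively. Then P(−Z < X and X < 0) ≤ τ/(2πσ). -/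
/-!
Conditioning on `Z`, the probability is `E[γ_σ(-Z, 0)]`, where `γ_σ` is the law of `X`.
The density of `γ_σ` is at most `1 / (σ √(2π))`, so `γ_σ(-z, 0) ≤ z⁺ / (σ √(2π))`,
and `E[Z⁺] = τ / √(2π)`.
-/

open MeasureTheory ProbabilityTheory Real Set
open scoped NNReal ENNReal

theorem integral_Ioi_mul_exp_neg_mul_sq {b : ℝ} (hb : 0 < b) :
    ∫ x in Ioi (0 : ℝ), x * exp (-b * x ^ 2) = (2 * b)⁻¹ := by
  have h := integral_rpow_mul_exp_neg_mul_rpow (p := 2) (q := 1) two_pos (by norm_num) hb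
  norm_num [Real.rpow_neg hb.le] at h
  simp only [neg_mul, h]
  ring

namespace ProbabilityTheory

lemma gaussianPDFReal_le (μ : ℝ) (v : ℝ≥0) (x : ℝ) :
    gaussianPDFReal μ v x ≤ (√(2 * π * v))⁻¹ := by
  refine mul_le_of_le_one_right (by positivity) (exp_le_one_iff.mpr ?_)
  exact div_nonpos_of_nonpos_of_nonneg (neg_nonpos.mpr (sq_nonneg _)) (by positivity)

lemma gaussianReal_le_mul_volume (μ : ℝ) {v : ℝ≥0} (hv : v ≠ 0) (s : Set ℝ) :
    gaussianReal μ v s ≤ ENNReal.ofReal (√(2 * π * v))⁻¹ * volume s := by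
  rw [gaussianReal_apply μ hv, ← setLIntegral_const]
  exact lintegral_mono fun x => ENNReal.ofReal_le_ofReal (gaussianPDFReal_le μ v x)

lemma lintegral_ofReal_gaussianReal_zero (v : ℝ≥0) :
    ∫⁻ x, ENNReal.ofReal x ∂gaussianReal 0 v = ENNReal.ofReal (√v / √(2 * π)) := by
  rcases eq_or_ne v 0 with rfl | hv
  · simp [gaussianReal_zero_var]
  have hv' : (0 : ℝ) < v := by positivity
  have hsupp : (fun x => ENNReal.ofReal (gaussianPDFReal 0 v x * x)).support ⊆ Ioi 0 := by
    intro x hx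
    by_contra h
    exact hx (ENNReal.ofReal_of_nonpos
      (mul_nonpos_of_nonneg_of_nonpos (gaussianPDFReal_nonneg _ _ _) (not_lt.mp h)))
  have hpdf : ∀ x, gaussianPDFReal 0 v x * x =
      (√(2 * π * v))⁻¹ * (x * exp (-(2 * v : ℝ)⁻¹ * x ^ 2)) := fun x => by
    rw [gaussianPDFReal]
    ring_nf
  calc ∫⁻ x, ENNReal.ofReal x ∂gaussianReal 0 v
      = ∫⁻ x, ENNReal.ofReal (gaussianPDFReal 0 v x * x) := by
        rw [gaussianReal_of_var_ne_zero 0 hv,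
          lintegral_withDensity_eq_lintegral_mul _ (measurable_gaussianPDF _ _)
            ENNReal.measurable_ofReal]
        refine lintegral_congr fun x => ?_
        simp [gaussianPDF, ENNReal.ofReal_mul (gaussianPDFReal_nonneg _ _ _)]
    _ = ∫⁻ x in Ioi 0, ENNReal.ofReal (gaussianPDFReal 0 v x * x) :=
        (setLIntegral_eq_of_support_subset hsupp).symm
    _ = ENNReal.ofReal (∫ x in Ioi 0, gaussianPDFReal 0 v x * x) := by
        refine (ofReal_integral_eq_lintegral_ofReal ?_ ?_).symm
        · simp_rw [hpdf]
          exact ((integrable_mul_exp_neg_mul_sq (by positivity)).const_mul _).integrableOn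
        · exact (ae_restrict_iff' measurableSet_Ioi).mpr (ae_of_all _ fun x hx =>
            mul_nonneg (gaussianPDFReal_nonneg _ _ _) (le_of_lt hx))
    _ = ENNReal.ofReal (√v / √(2 * π)) := by
        simp_rw [hpdf]
        rw [integral_const_mul, integral_Ioi_mul_exp_neg_mul_sq (by positivity)]
        congr 1
        rw [mul_comm (2 * π), Real.sqrt_mul hv'.le]
        have hsqrt_pos : 0 < √(v : ℝ) := Real.sqrt_pos.mpr hv'
        field_simp
        rw [Real.sq_sqrt hv'.le]

lemma IndepFun.measure_preimage_prodMk_eq_lintegral {Ω α β : Type*} [MeasurableSpace Ω]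
    [MeasurableSpace α] [MeasurableSpace β] {P : Measure Ω} [IsFiniteMeasure P]
    {X : Ω → α} {Z : Ω → β} (hX : Measurable X) (hZ : Measurable Z) (hind : IndepFun X Z P)
    {s : Set (α × β)} (hs : MeasurableSet s) :
    P ((fun ω => (X ω, Z ω)) ⁻¹' s) =
      ∫⁻ z, P.map X ((fun x => (x, z)) ⁻¹' s) ∂P.map Z := by
  rw [← Measure.map_apply (hX.prodMk hZ) hs,
    (indepFun_iff_map_prod_eq_prod_map_map hX.aemeasurable hZ.aemeasurable).mp hind,
    Measure.prod_apply_symm hs]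

end ProbabilityTheory

theorem stmt7 {Ω : Type*} [MeasurableSpace Ω] (P : Measure Ω) [IsProbabilityMeasure P]
    (X Z : Ω → ℝ) (hXmeas : Measurable X) (hZmeas : Measurable Z)
    (σ τ : ℝ) (hσ : 0 < σ) (hτ : 0 < τ)
    (hX : Measure.map X P = gaussianReal 0 (Real.toNNReal (σ ^ 2)))
    (hZ : Measure.map Z P = gaussianReal 0 (Real.toNNReal (τ ^ 2)))
    (hind : IndepFun X Z P) :
    (P {ω | -Z ω < X ω ∧ X ω < 0}).toReal ≤ τ / (2 * Real.pi * σ) := by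
  have hσ2 : (σ ^ 2).toNNReal ≠ 0 := by simp [hσ.ne']
  set c := (√(2 * π * (σ ^ 2).toNNReal))⁻¹
  have hT : MeasurableSet {p : ℝ × ℝ | -p.2 < p.1 ∧ p.1 < 0} := by measurability
  have hcond := hind.measure_preimage_prodMk_eq_lintegral hXmeas hZmeas hT
  rw [hX, hZ] at hcond
  have hbound : P {ω | -Z ω < X ω ∧ X ω < 0} ≤
      ENNReal.ofReal c * ENNReal.ofReal (√(τ ^ 2).toNNReal / √(2 * π)) :=
    calc P {ω | -Z ω < X ω ∧ X ω < 0} = _ := hcond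
      _ ≤ ∫⁻ z, ENNReal.ofReal c * ENNReal.ofReal z ∂gaussianReal 0 (τ ^ 2).toNNReal := by
          refine lintegral_mono fun z => ?_
          have h := gaussianReal_le_mul_volume 0 hσ2 (Ioo (-z) 0)
          rwa [Real.volume_Ioo, sub_neg_eq_add, zero_add] at h
      _ = _ := by
          rw [lintegral_const_mul _ ENNReal.measurable_ofReal, lintegral_ofReal_gaussianReal_zero]
  calc (P {ω | -Z ω < X ω ∧ X ω < 0}).toReal
      ≤ (ENNReal.ofReal c * ENNReal.ofReal (√(τ ^ 2).toNNReal / √(2 * π))).toReal :=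
        ENNReal.toReal_mono (by finiteness) hbound
    _ = τ / (2 * π * σ) := by
        rw [← ENNReal.ofReal_mul (by positivity), ENNReal.toReal_ofReal (by positivity)]
        simp only [c, Real.coe_toNNReal _ (sq_nonneg _), Real.sqrt_mul two_pi_pos.le,
          Real.sqrt_sq hσ.le, Real.sqrt_sq hτ.le]
        field_simp
        rw [Real.sq_sqrt two_pi_pos.le]
end

section
/- For all real x, y, z > 0, x ∫_0^z ∫_0^z [x(2y + ξ₁ + ξ₂) + (y + ξ₁)(y + ξ₂)]^{−3/2} dξ₁ dξ₂ ≤ 4 x^{−1/2} (2√(2y + z) − √(2y) − √(2y + 2z)). -/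
open MeasureTheory Real Set

lemma int_shift_rpow (c z r : ℝ) (hc : 0 < c) (hz : 0 < z) (hr : r ≠ -1) :
    ∫ t in Set.Ioo (0:ℝ) z, (c + t) ^ r = ((c+z)^(r+1) - c^(r+1))/(r+1) := by
  rw [← MeasureTheory.integral_Ioc_eq_integral_Ioo,
    ← intervalIntegral.integral_of_le hz.le,
    intervalIntegral.integral_comp_add_left (fun u => u ^ r) c,
    integral_rpow (Or.inr ⟨hr, by
      intro h
      rcases Set.mem_uIcc.mp h with ⟨h1, _⟩ | ⟨_, h2⟩ <;> nlinarith⟩)]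
  ring_nf

lemma cont_rpow_on (a : ℝ → ℝ) (r : ℝ) (ha : Continuous a) (s : Set ℝ)
    (hpos : ∀ t ∈ s, 0 < a t) :
    ContinuousOn (fun t => a t ^ r) s :=
  ContinuousOn.rpow_const ha.continuousOn (fun t ht => Or.inl (hpos t ht).ne')

theorem stmt11 (x y z : ℝ) (hx : 0 < x) (hy : 0 < y) (hz : 0 < z) :
    x * ∫ ξ₁ in Set.Ioo (0:ℝ) z, ∫ ξ₂ in Set.Ioo (0:ℝ) z,
        (x * (2 * y + ξ₁ + ξ₂) + (y + ξ₁) * (y + ξ₂)) ^ (-(3:ℝ)/2)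
      ≤ 4 * x ^ (-(1:ℝ)/2) *
        (2 * Real.sqrt (2 * y + z) - Real.sqrt (2 * y) - Real.sqrt (2 * y + 2 * z)) := by
  have h3 : (-(3:ℝ)/2) ≠ -1 := by norm_num
  have h1 : (-(1:ℝ)/2) ≠ -1 := by norm_num
  set h : ℝ → ℝ := fun ξ₁ => x^(-(3:ℝ)/2) *
      (((2*y+ξ₁+z)^(-(3:ℝ)/2+1) - (2*y+ξ₁)^(-(3:ℝ)/2+1))/(-(3:ℝ)/2+1)) with hh
  -- Step 1: pointwise bound on the inner integral
  have key : ∀ ξ₁ ∈ Set.Ioo (0:ℝ) z,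
      (∫ ξ₂ in Set.Ioo (0:ℝ) z, (x*(2*y+ξ₁+ξ₂)+(y+ξ₁)*(y+ξ₂))^(-(3:ℝ)/2)) ≤ h ξ₁ := by
    intro ξ₁ hξ₁
    obtain ⟨h0, _⟩ := hξ₁
    have hbpos : ∀ ξ₂ ∈ Set.Icc (0:ℝ) z, 0 < x*(2*y+ξ₁+ξ₂)+(y+ξ₁)*(y+ξ₂) := by
      intro ξ₂ hξ₂; nlinarith [hξ₂.1]
    have hgpos : ∀ ξ₂ ∈ Set.Icc (0:ℝ) z, 0 < 2*y+ξ₁+ξ₂ := by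
      intro ξ₂ hξ₂; nlinarith [hξ₂.1]
    have hFint : IntegrableOn (fun ξ₂ => (x*(2*y+ξ₁+ξ₂)+(y+ξ₁)*(y+ξ₂))^(-(3:ℝ)/2))
        (Set.Ioo (0:ℝ) z) := by
      refine ((cont_rpow_on _ _ (by continuity) _ hbpos).integrableOn_Icc).mono_set
        Set.Ioo_subset_Icc_self
    have hGint : IntegrableOn (fun ξ₂ => x^(-(3:ℝ)/2) * (2*y+ξ₁+ξ₂)^(-(3:ℝ)/2))
        (Set.Ioo (0:ℝ) z) := by
      refine (((cont_rpow_on _ _ (by continuity) _ hgpos).const_smul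
        (x^(-(3:ℝ)/2))).integrableOn_Icc).mono_set Set.Ioo_subset_Icc_self
    have step := setIntegral_mono_on hFint hGint measurableSet_Ioo (fun ξ₂ hξ₂ => by
      have hb := hbpos ξ₂ (Set.Ioo_subset_Icc_self hξ₂)
      have hxpos : 0 < x*(2*y+ξ₁+ξ₂) := by nlinarith [hξ₂.1, hgpos ξ₂ (Set.Ioo_subset_Icc_self hξ₂)]
      calc (x*(2*y+ξ₁+ξ₂)+(y+ξ₁)*(y+ξ₂))^(-(3:ℝ)/2)
          ≤ (x*(2*y+ξ₁+ξ₂))^(-(3:ℝ)/2) := by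
            apply Real.rpow_le_rpow_of_nonpos hxpos (by nlinarith [hξ₂.1]) (by norm_num)
        _ = x^(-(3:ℝ)/2) * (2*y+ξ₁+ξ₂)^(-(3:ℝ)/2) :=
            Real.mul_rpow hx.le (hgpos ξ₂ (Set.Ioo_subset_Icc_self hξ₂)).le)
    refine step.trans_eq ?_
    rw [MeasureTheory.integral_const_mul, hh]
    congr 1
    have := int_shift_rpow (2*y+ξ₁) z (-(3:ℝ)/2) (by nlinarith) hz h3
    rw [show (fun t : ℝ => (2*y+ξ₁+t)^(-(3:ℝ)/2)) = (fun t => ((2*y+ξ₁)+t)^(-(3:ℝ)/2)) by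
      funext t; ring_nf] at *
    rw [this]
  -- Step 2: outer integral bound and exact computation
  have hp1 : ∀ ξ₁ ∈ Set.Icc (0:ℝ) z, 0 < 2*y+ξ₁+z := by intro t ht; nlinarith [ht.1]
  have hp2 : ∀ ξ₁ ∈ Set.Icc (0:ℝ) z, 0 < 2*y+ξ₁ := by intro t ht; nlinarith [ht.1]
  have intA : IntegrableOn (fun ξ₁ => (2*y+ξ₁+z)^(-(3:ℝ)/2+1)) (Set.Ioo (0:ℝ) z) :=
    ((cont_rpow_on _ _ (by continuity) _ hp1).integrableOn_Icc).mono_set Set.Ioo_subset_Icc_self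
  have intB : IntegrableOn (fun ξ₁ => (2*y+ξ₁)^(-(3:ℝ)/2+1)) (Set.Ioo (0:ℝ) z) :=
    ((cont_rpow_on _ _ (by continuity) _ hp2).integrableOn_Icc).mono_set Set.Ioo_subset_Icc_self
  have hhint : IntegrableOn h (Set.Ioo (0:ℝ) z) := by
    rw [hh]
    exact (((intA.sub intB).div_const _).const_mul _)
  have hfnonneg : 0 ≤ᵐ[volume.restrict (Set.Ioo (0:ℝ) z)]
      (fun ξ₁ => ∫ ξ₂ in Set.Ioo (0:ℝ) z, (x*(2*y+ξ₁+ξ₂)+(y+ξ₁)*(y+ξ₂))^(-(3:ℝ)/2)) := by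
    refine ae_restrict_of_forall_mem measurableSet_Ioo fun ξ₁ hξ₁ => ?_
    refine setIntegral_nonneg measurableSet_Ioo fun ξ₂ hξ₂ => ?_
    have : 0 < x*(2*y+ξ₁+ξ₂)+(y+ξ₁)*(y+ξ₂) := by nlinarith [hξ₁.1, hξ₂.1]
    exact Real.rpow_nonneg this.le _
  have houter : (∫ ξ₁ in Set.Ioo (0:ℝ) z, ∫ ξ₂ in Set.Ioo (0:ℝ) z,
        (x*(2*y+ξ₁+ξ₂)+(y+ξ₁)*(y+ξ₂))^(-(3:ℝ)/2)) ≤ ∫ ξ₁ in Set.Ioo (0:ℝ) z, h ξ₁ :=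
    integral_mono_of_nonneg hfnonneg hhint (ae_restrict_of_forall_mem measurableSet_Ioo key)
  have hA : ∫ ξ₁ in Set.Ioo (0:ℝ) z, (2*y+ξ₁+z)^(-(3:ℝ)/2+1)
      = (((2*y+z)+z)^((-(3:ℝ)/2+1)+1) - (2*y+z)^((-(3:ℝ)/2+1)+1))/((-(3:ℝ)/2+1)+1) := by
    rw [show (fun ξ₁ : ℝ => (2*y+ξ₁+z)^(-(3:ℝ)/2+1)) = (fun t => ((2*y+z)+t)^(-(3:ℝ)/2+1)) by
      funext t; ring_nf]
    exact int_shift_rpow (2*y+z) z _ (by nlinarith) hz (by norm_num)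
  have hB : ∫ ξ₁ in Set.Ioo (0:ℝ) z, (2*y+ξ₁)^(-(3:ℝ)/2+1)
      = (((2*y)+z)^((-(3:ℝ)/2+1)+1) - (2*y)^((-(3:ℝ)/2+1)+1))/((-(3:ℝ)/2+1)+1) := by
    rw [show (fun ξ₁ : ℝ => (2*y+ξ₁)^(-(3:ℝ)/2+1)) = (fun t => ((2*y)+t)^(-(3:ℝ)/2+1)) by
      funext t; ring_nf]
    exact int_shift_rpow (2*y) z _ (by nlinarith) hz (by norm_num)
  have hinth : ∫ ξ₁ in Set.Ioo (0:ℝ) z, h ξ₁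
      = x^(-(3:ℝ)/2) * (((∫ ξ₁ in Set.Ioo (0:ℝ) z, (2*y+ξ₁+z)^(-(3:ℝ)/2+1))
        - ∫ ξ₁ in Set.Ioo (0:ℝ) z, (2*y+ξ₁)^(-(3:ℝ)/2+1))/(-(3:ℝ)/2+1)) := by
    rw [hh, MeasureTheory.integral_const_mul, integral_div, integral_sub intA intB]
  have hx32 : x * x^(-(3:ℝ)/2) = x^(-(1:ℝ)/2) := by
    calc x * x^(-(3:ℝ)/2) = x^(1:ℝ) * x^(-(3:ℝ)/2) := by rw [Real.rpow_one]
      _ = x^((1:ℝ) + -(3:ℝ)/2) := (Real.rpow_add hx _ _).symm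
      _ = x^(-(1:ℝ)/2) := by norm_num
  calc x * ∫ ξ₁ in Set.Ioo (0:ℝ) z, ∫ ξ₂ in Set.Ioo (0:ℝ) z,
        (x * (2 * y + ξ₁ + ξ₂) + (y + ξ₁) * (y + ξ₂)) ^ (-(3:ℝ)/2)
      ≤ x * ∫ ξ₁ in Set.Ioo (0:ℝ) z, h ξ₁ := mul_le_mul_of_nonneg_left houter hx.le
    _ = 4 * x ^ (-(1:ℝ)/2) *
        (2 * Real.sqrt (2 * y + z) - Real.sqrt (2 * y) - Real.sqrt (2 * y + 2 * z)) := by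
      rw [hinth, hA, hB, ← mul_assoc, hx32]
      rw [show ((2:ℝ)*y+z)+z = 2*y+2*z by ring]
      norm_num [Real.sqrt_eq_rpow]
      ring
end

section
/- Let α, β > 0 and let X, Y be independent centered Gaussian random variables with variances σ₁² > 0 and σ₂² > 0, respectively. Then E[p_α(X) p_β(X + Y)] = (2π)^{−1} ((α + σ₁²)(β + σ₂²) + α σ₁²)^{−1/2}. -/
/-!
Averaging `p_β(x + Y)` over `Y ~ N(0, σ₂²)` is a Gaussian convolution and gives `p_{β+σ₂²}(x)`.
A product of two Gaussian kernels is again a Gaussian kernel up to a constant factor,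
`p_a(y) p_b(x + y) = p_{a+b}(x) p_{ab/(a+b)}(y + ax/(a+b))` (completing the square), so averaging
`p_α(x) p_{β+σ₂²}(x)` over `X ~ N(0, σ₁²)` is one more convolution, evaluated at `0`.
-/

open MeasureTheory ProbabilityTheory Real

/-- The Gaussian kernel `p_ε(x) = (2πε)^{-1/2} exp(-x²/(2ε))`. -/
noncomputable def gaussKer (ε : ℝ) (x : ℝ) : ℝ :=
  (Real.sqrt (2 * Real.pi * ε))⁻¹ * Real.exp (-x ^ 2 / (2 * ε))

lemma gaussKer_nonneg (ε x : ℝ) : 0 ≤ gaussKer ε x := by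
  unfold gaussKer; positivity

lemma gaussKer_le_gaussKer_zero {ε : ℝ} (hε : 0 ≤ ε) (x : ℝ) : gaussKer ε x ≤ gaussKer ε 0 := by
  unfold gaussKer
  gcongr _ * rexp ?_
  rw [zero_pow two_ne_zero, neg_zero, zero_div, neg_div, neg_nonpos]
  positivity

@[fun_prop]
lemma continuous_gaussKer (ε : ℝ) : Continuous (gaussKer ε) := by
  unfold gaussKer; fun_prop

lemma gaussKer_zero_right (ε : ℝ) : gaussKer ε 0 = (√(2 * π * ε))⁻¹ := by
  simp [gaussKer]

lemma gaussKer_eq_gaussianPDFReal (v : NNReal) : gaussKer v = gaussianPDFReal 0 v := by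
  ext x; simp [gaussKer, gaussianPDFReal]

lemma integral_gaussKer_add {ε : ℝ} (hε : 0 < ε) (c : ℝ) : ∫ y, gaussKer ε (y + c) = 1 := by
  lift ε to NNReal using hε.le
  rw [integral_add_right_eq_self (gaussKer ε) c, gaussKer_eq_gaussianPDFReal,
    integral_gaussianPDFReal_eq_one 0 (by exact_mod_cast hε.ne')]

lemma integral_gaussianReal_eq_integral_gaussKer_mul {v : ℝ} (hv : 0 < v) (f : ℝ → ℝ) :
    ∫ x, f x ∂gaussianReal 0 v.toNNReal = ∫ x, gaussKer v x * f x := by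
  rw [integral_gaussianReal_eq_integral_smul (Real.toNNReal_pos.2 hv).ne', ← gaussKer_eq_gaussianPDFReal,
    Real.coe_toNNReal _ hv.le]
  rfl

lemma integrable_gaussKer_mul_gaussKer_add {a b : ℝ} (ha : 0 ≤ a) (hb : 0 ≤ b)
    (μ : Measure (ℝ × ℝ)) [IsFiniteMeasure μ] :
    Integrable (fun p : ℝ × ℝ ↦ gaussKer a p.1 * gaussKer b (p.1 + p.2)) μ := by
  refine .of_bound (by fun_prop) (gaussKer a 0 * gaussKer b 0) (ae_of_all _ fun p ↦ ?_)
  rw [Real.norm_of_nonneg (mul_nonneg (gaussKer_nonneg _ _) (gaussKer_nonneg _ _))]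
  exact mul_le_mul (gaussKer_le_gaussKer_zero ha _) (gaussKer_le_gaussKer_zero hb _)
    (gaussKer_nonneg _ _) (gaussKer_nonneg _ _)

lemma ProbabilityTheory.IndepFun.integral_comp_prodMk {Ω β γ E : Type*} [MeasurableSpace Ω] [MeasurableSpace β]
    [MeasurableSpace γ] [NormedAddCommGroup E] [NormedSpace ℝ E] {P : Measure Ω}
    [IsFiniteMeasure P] {X : Ω → β} {Y : Ω → γ} (hind : IndepFun X Y P) (hX : AEMeasurable X P)
    (hY : AEMeasurable Y P) {f : β × γ → E}
    (hf : AEStronglyMeasurable f ((P.map X).prod (P.map Y))) :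
    ∫ ω, f (X ω, Y ω) ∂P = ∫ p, f p ∂(P.map X).prod (P.map Y) := by
  rw [← (indepFun_iff_map_prod_eq_prod_map_map hX hY).1 hind] at hf ⊢
  exact integral_map (hX.prodMk hY) hf |>.symm

lemma gaussKer_mul_gaussKer_add {a b : ℝ} (ha : 0 < a) (hb : 0 < b) (x y : ℝ) :
    gaussKer a y * gaussKer b (x + y)
      = gaussKer (a + b) x * gaussKer (a * b / (a + b)) (y + a * x / (a + b)) := by
  have hab : 0 < a + b := by positivity
  have hexp : -y ^ 2 / (2 * a) + -(x + y) ^ 2 / (2 * b)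
      = -x ^ 2 / (2 * (a + b)) + -(y + a * x / (a + b)) ^ 2 / (2 * (a * b / (a + b))) := by
    field_simp; ring
  have hsqrt : √(2 * π * a) * √(2 * π * b)
      = √(2 * π * (a + b)) * √(2 * π * (a * b / (a + b))) := by
    rw [← sqrt_mul (by positivity), ← sqrt_mul (by positivity)]
    congr 1; field_simp
  simp only [gaussKer]
  rw [mul_mul_mul_comm, ← exp_add, hexp, exp_add, ← mul_inv, hsqrt, mul_inv, mul_mul_mul_comm]

lemma integral_gaussKer_mul_gaussKer_add {a b : ℝ} (ha : 0 < a) (hb : 0 < b) (x : ℝ) :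
    ∫ y, gaussKer a y * gaussKer b (x + y) = gaussKer (a + b) x := by
  simp_rw [gaussKer_mul_gaussKer_add ha hb, integral_const_mul,
    integral_gaussKer_add (by positivity : 0 < a * b / (a + b)), mul_one]

lemma integral_gaussKer_mul_gaussKer_mul_gaussKer {s a m : ℝ} (hs : 0 < s) (ha : 0 < a)
    (hm : 0 < m) :
    ∫ x, gaussKer s x * (gaussKer a x * gaussKer m x)
      = (2 * π)⁻¹ * ((a + s) * m + a * s) ^ (-(1 : ℝ) / 2) := by
  have hprod (x : ℝ) : gaussKer a x * gaussKer m x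
      = gaussKer (a + m) 0 * gaussKer (a * m / (a + m)) (0 + x) := by
    simpa using gaussKer_mul_gaussKer_add ha hm 0 x
  have hvar : 2 * π * (a + m) * (2 * π * (s + a * m / (a + m)))
      = (2 * π) ^ 2 * ((a + s) * m + a * s) := by
    field_simp; ring
  simp_rw [hprod, mul_left_comm (gaussKer s _), integral_const_mul,
    integral_gaussKer_mul_gaussKer_add hs (by positivity : 0 < a * m / (a + m)),
    gaussKer_zero_right, ← mul_inv, ← sqrt_mul (by positivity : (0 : ℝ) ≤ 2 * π * (a + m)), hvar]
  rw [sqrt_mul (by positivity), sqrt_sq (by positivity), mul_inv, neg_div,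
    rpow_neg (by positivity), sqrt_eq_rpow]

theorem stmt12 {Ω : Type*} [MeasurableSpace Ω] (P : Measure Ω) [IsProbabilityMeasure P]
    (X Y : Ω → ℝ) (hXmeas : Measurable X) (hYmeas : Measurable Y)
    (α β σ₁ σ₂ : ℝ) (hα : 0 < α) (hβ : 0 < β) (hσ₁ : 0 < σ₁) (hσ₂ : 0 < σ₂)
    (hX : Measure.map X P = gaussianReal 0 (Real.toNNReal (σ₁ ^ 2)))
    (hY : Measure.map Y P = gaussianReal 0 (Real.toNNReal (σ₂ ^ 2)))
    (hind : IndepFun X Y P) :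
    ∫ ω, gaussKer α (X ω) * gaussKer β (X ω + Y ω) ∂P
      = (2 * Real.pi)⁻¹ *
        ((α + σ₁ ^ 2) * (β + σ₂ ^ 2) + α * σ₁ ^ 2) ^ (-(1:ℝ)/2) := by
  have hv₁ : 0 < σ₁ ^ 2 := by positivity
  have hv₂ : 0 < σ₂ ^ 2 := by positivity
  rw [hind.integral_comp_prodMk (f := fun p : ℝ × ℝ ↦ gaussKer α p.1 * gaussKer β (p.1 + p.2))
      hXmeas.aemeasurable hYmeas.aemeasurable (by fun_prop), hX, hY,
    integral_prod _ (integrable_gaussKer_mul_gaussKer_add hα.le hβ.le _)]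
  simp_rw [integral_gaussianReal_eq_integral_gaussKer_mul hv₂, mul_left_comm _ (gaussKer α _),
    integral_const_mul, add_comm β, integral_gaussKer_mul_gaussKer_add hv₂ hβ]
  rw [integral_gaussianReal_eq_integral_gaussKer_mul hv₁,
    integral_gaussKer_mul_gaussKer_mul_gaussKer hv₁ hα (by positivity)]
end

section
/- Let a < b be real numbers and β > 3/2. For n ∈ ℕ set r_j^n = a + (j/n)(b − a) for j = 0, 1, …, n. Then lim_{n→∞} Σ_{j=0}^{n−1} (∫_a^{r_j^n} (√(r_{j+1}^n − r) − √(r_j^n − r))^β dr)^{2/3} = 0. -/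
open MeasureTheory Real Filter

/-!
On the `j`-th cell put `δ = (b - a) / n` and `u = r_j - r`; the integrand is
`(√(u + δ) - √u) ^ β`. Interpolating between `√(u + δ) - √u ≤ √δ` and
`√(u + δ) - √u ≤ δ / √(u + δ)` bounds it by `δ ^ (β / 2 + γ) * (u + δ) ^ (-γ)`, and for
`γ < 1` this is integrable uniformly in `n`. With `γ = min (β / 2) (7 / 8)` every cell integral is
`O(n ^ (-ρ))` with `ρ = β / 2 + γ > 3 / 2`, so the sum of `n` terms of size `O(n ^ (-2ρ/3))`
tends to `0`.
-/

lemma sqrt_add_sub_sqrt_le_div {u δ : ℝ} (hu : 0 ≤ u) (hδ : 0 < δ) :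
    √(u + δ) - √u ≤ δ / √(u + δ) := by
  have hpos : 0 < √(u + δ) := sqrt_pos.2 (by linarith)
  rw [le_div_iff₀ hpos]
  nlinarith [mul_self_sqrt hu, mul_self_sqrt (add_nonneg hu hδ.le), sqrt_nonneg u,
    sqrt_le_sqrt (le_add_of_nonneg_right hδ.le : u ≤ u + δ)]

lemma sqrt_add_sub_sqrt_rpow_le {u δ β γ : ℝ} (hu : 0 ≤ u) (hδ : 0 < δ) (hγ : 0 ≤ γ)
    (hγβ : 2 * γ ≤ β) :
    (√(u + δ) - √u) ^ β ≤ δ ^ (β / 2 + γ) * (u + δ) ^ (-γ) := by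
  have hsum : 0 < u + δ := by linarith
  have hx0 : 0 ≤ √(u + δ) - √u := sub_nonneg.2 (sqrt_le_sqrt (by linarith))
  have hx_sqrt : √(u + δ) - √u ≤ √δ := by
    have : √(u + δ) ≤ √u + √δ := sqrt_le_iff.2 ⟨by positivity, by
      nlinarith [sq_sqrt hu, sq_sqrt hδ.le, mul_nonneg (sqrt_nonneg u) (sqrt_nonneg δ)]⟩
    linarith
  calc (√(u + δ) - √u) ^ β
      = (√(u + δ) - √u) ^ (β - 2 * γ) * (√(u + δ) - √u) ^ (2 * γ) := by
        rw [← rpow_add_of_nonneg hx0 (by linarith) (by positivity), sub_add_cancel]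
    _ ≤ √δ ^ (β - 2 * γ) * (δ / √(u + δ)) ^ (2 * γ) := by
        gcongr
        exact sqrt_add_sub_sqrt_le_div hu hδ
    _ = δ ^ (β / 2 + γ) * (u + δ) ^ (-γ) := by
        rw [div_rpow hδ.le (sqrt_nonneg _), sqrt_eq_rpow, sqrt_eq_rpow, ← rpow_mul hδ.le,
          ← rpow_mul hsum.le, rpow_neg hsum.le, mul_div_assoc', div_eq_mul_inv,
          ← rpow_add hδ]
        ring_nf

lemma integral_sqrt_sub_sqrt_rpow_nonneg {a s t β : ℝ} (has : a ≤ s) (hst : s ≤ t) :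
    0 ≤ ∫ r in a..s, (√(t - r) - √(s - r)) ^ β :=
  intervalIntegral.integral_nonneg has fun _ _ =>
    rpow_nonneg (sub_nonneg.2 (sqrt_le_sqrt (by linarith))) _

lemma integral_sqrt_sub_sqrt_rpow_le {a b s t β γ : ℝ} (has : a ≤ s) (hst : s < t)
    (htb : t ≤ b) (hγ₀ : 0 ≤ γ) (hγ₁ : γ < 1) (hγβ : 2 * γ ≤ β) :
    ∫ r in a..s, (√(t - r) - √(s - r)) ^ β
      ≤ (t - s) ^ (β / 2 + γ) * ((b - a) ^ (1 - γ) / (1 - γ)) := by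
  have hpos : ∀ r ∈ Set.Icc a s, 0 < t - r := fun r hr => by linarith [hr.2]
  have hpointwise : ∀ r ∈ Set.Icc a s,
      (√(t - r) - √(s - r)) ^ β ≤ (t - s) ^ (β / 2 + γ) * (t - r) ^ (-γ) := fun r hr => by
    have := sqrt_add_sub_sqrt_rpow_le (sub_nonneg.2 hr.2) (sub_pos.2 hst) hγ₀ hγβ
    rwa [sub_add_sub_cancel'] at this
  have hf : ContinuousOn (fun r => (√(t - r) - √(s - r)) ^ β) (Set.Icc a s) :=
    ContinuousOn.rpow_const (by fun_prop) fun _ _ => Or.inr (by linarith)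
  have hg : ContinuousOn (fun r => (t - s) ^ (β / 2 + γ) * (t - r) ^ (-γ)) (Set.Icc a s) :=
    continuousOn_const.mul <|
      ContinuousOn.rpow_const (by fun_prop) fun r hr => Or.inl (hpos r hr).ne'
  have hkernel :
      ∫ r in a..s, (t - r) ^ (-γ) = ((t - a) ^ (1 - γ) - (t - s) ^ (1 - γ)) / (1 - γ) := by
    rw [intervalIntegral.integral_comp_sub_left (fun u => u ^ (-γ)),
      integral_rpow (Or.inl (by linarith)), neg_add_eq_sub]
  calc ∫ r in a..s, (√(t - r) - √(s - r)) ^ β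
      ≤ ∫ r in a..s, (t - s) ^ (β / 2 + γ) * (t - r) ^ (-γ) :=
        intervalIntegral.integral_mono_on has (hf.intervalIntegrable_of_Icc has)
          (hg.intervalIntegrable_of_Icc has) hpointwise
    _ ≤ (t - s) ^ (β / 2 + γ) * ((b - a) ^ (1 - γ) / (1 - γ)) := by
        rw [intervalIntegral.integral_const_mul, hkernel]
        gcongr
        linarith [rpow_nonneg (sub_nonneg.2 hst.le) (1 - γ),
          rpow_le_rpow (by linarith : 0 ≤ t - a) (by linarith : t - a ≤ b - a)
            (by linarith : 0 ≤ 1 - γ)]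

lemma tendsto_sum_range_rpow_of_le {I : ℕ → ℕ → ℝ} {C ρ q : ℝ} (hC : 0 ≤ C)
    (hq : 0 ≤ q) (hqρ : 1 < q * ρ) (hI₀ : ∀ n, ∀ j < n, 0 ≤ I n j)
    (hI : ∀ n, ∀ j < n, I n j ≤ C * (n : ℝ) ^ (-ρ)) :
    Tendsto (fun n => ∑ j ∈ Finset.range n, I n j ^ q) atTop (nhds 0) := by
  have hbound :
      ∀ n : ℕ, ∑ j ∈ Finset.range n, I n j ^ q ≤ C ^ q * (n : ℝ) ^ (1 - q * ρ) := by
    intro n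
    rcases n.eq_zero_or_pos with rfl | hn
    · simp [zero_rpow (by linarith : 1 - q * ρ ≠ 0)]
    have hn' : (0 : ℝ) < n := Nat.cast_pos.2 hn
    calc ∑ j ∈ Finset.range n, I n j ^ q
        ≤ ∑ _j ∈ Finset.range n, (C * (n : ℝ) ^ (-ρ)) ^ q :=
          Finset.sum_le_sum fun j hj =>
            rpow_le_rpow (hI₀ n j (Finset.mem_range.1 hj)) (hI n j (Finset.mem_range.1 hj)) hq
      _ = C ^ q * (n : ℝ) ^ (1 - q * ρ) := by
          rw [Finset.sum_const, Finset.card_range, nsmul_eq_mul,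
            mul_rpow hC (rpow_nonneg hn'.le _), ← rpow_mul hn'.le,
            show 1 - q * ρ = 1 + -ρ * q by ring, rpow_add hn', rpow_one]
          ring
  have hlim : Tendsto (fun n : ℕ => C ^ q * (n : ℝ) ^ (1 - q * ρ)) atTop (nhds 0) := by
    have := (tendsto_rpow_neg_atTop (by linarith : 0 < q * ρ - 1)).comp
      tendsto_natCast_atTop_atTop
    simpa [Function.comp_def] using this.const_mul (C ^ q)
  exact squeeze_zero (fun n => Finset.sum_nonneg fun j hj =>
    rpow_nonneg (hI₀ n j (Finset.mem_range.1 hj)) q) hbound hlim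

lemma uniform_partition_bounds {a b : ℝ} (hab : a ≤ b) {n j : ℕ} (hj : j < n) :
    a ≤ a + j / n * (b - a) ∧ a + (j + 1) / n * (b - a) ≤ b := by
  have hn : (0 : ℝ) < n := by exact_mod_cast j.zero_le.trans_lt hj
  have hjn : ((j : ℝ) + 1) / n ≤ 1 := (div_le_one hn).2 (by exact_mod_cast hj)
  constructor <;> nlinarith [div_nonneg j.cast_nonneg hn.le]

theorem stmt14 (a b β : ℝ) (hab : a < b) (hβ : 3/2 < β) :
    Tendsto (fun n : ℕ =>
        ∑ j ∈ Finset.range n,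
          (∫ r in a..(a + (j : ℝ) / n * (b - a)),
              (Real.sqrt ((a + ((j : ℝ) + 1) / n * (b - a)) - r)
                - Real.sqrt ((a + (j : ℝ) / n * (b - a)) - r)) ^ β) ^ ((2:ℝ)/3))
      atTop (nhds 0) := by
  set γ := min (β / 2) (7 / 8) with hγ
  have hγ₀ : 0 ≤ γ := le_min (by linarith) (by norm_num)
  have hγ₁ : γ < 1 := (min_le_right _ _).trans_lt (by norm_num)
  have hγβ : 2 * γ ≤ β := by linarith [min_le_left (β / 2) (7 / 8)]
  have hρ : 1 < 2 / 3 * (β / 2 + γ) := by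
    rcases min_choice (β / 2) (7 / 8) with h | h <;> rw [hγ, h] <;> linarith
  refine tendsto_sum_range_rpow_of_le
    (C := (b - a) ^ (1 - γ) / (1 - γ) * (b - a) ^ (β / 2 + γ))
    (by have := sub_pos.2 hab; positivity) (by norm_num) hρ (fun n j hj => ?_) (fun n j hj => ?_)
  all_goals
    obtain ⟨has, htb⟩ := uniform_partition_bounds hab.le hj
    have hn : (0 : ℝ) < n := by exact_mod_cast j.zero_le.trans_lt hj
    have hgap : a + ((j : ℝ) + 1) / n * (b - a) - (a + j / n * (b - a)) = (b - a) / n := by ring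
    have hst : a + (j : ℝ) / n * (b - a) < a + ((j : ℝ) + 1) / n * (b - a) := by
      linarith [div_pos (sub_pos.2 hab) hn]
  · exact integral_sqrt_sub_sqrt_rpow_nonneg has hst.le
  · refine (integral_sqrt_sub_sqrt_rpow_le has hst htb hγ₀ hγ₁ hγβ).trans_eq ?_
    rw [hgap, div_rpow (sub_pos.2 hab).le hn.le, rpow_neg hn.le, div_eq_mul_inv]
    ring
end
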